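/- arXiv:math/0511052 — 2 statements merged into one kernel-verified Lean document; each statement's English description precedes it below -/
import Mathlib

section
/- Let U be a standard normal random variable, σ > 0, r ∈ (0,2), and μ_r = E[|U|^r]. Let X_t = σ√t·U + X''_t where X''_t is independent of U and satisfies E[min(1, (X''_t)²/t)] → 0 as t → 0 and t^{−r/2} E[min(1,|X''_t|^r)] → 0 as t → 0. Then t^{−r/2} E[min(1,|X_t|^r)] → σ^r μ_r as t → 0. -/
/-!
Write the increment as `Y + Z` with `Y = σ √t U` and `Z = X''_t`. For every `ε > 0`,
`x + y ≤ max ((1 + ε) x, (1 + ε⁻¹) y)` gives the quasi-triangle inequality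
`E[1 ∧ |Y + Z|^r] ≤ (1 + ε)^r E[1 ∧ |Y|^r] + (1 + ε⁻¹)^r E[1 ∧ |Z|^r]`, and also its converse
with the roles of `Y` and `Y + Z` exchanged. After scaling by `t^(-r/2)` the `Z`-terms vanish,
and by scaling and dominated convergence `t^(-r/2) E[1 ∧ |σ √t U|^r] → σ^r E|U|^r`;
letting `ε → 0` squeezes the limit.
-/

open MeasureTheory ProbabilityTheory Filter Set
open scoped Topology

lemma add_le_max_one_add_mul {x y ε : ℝ} (hε : 0 < ε) :
    x + y ≤ max ((1 + ε) * x) ((1 + ε⁻¹) * y) := by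
  rcases le_total y (ε * x) with h | h
  · exact le_max_of_le_left (by linarith)
  · have : x ≤ ε⁻¹ * y := by rwa [← div_eq_inv_mul, le_div_iff₀' hε]
    exact le_max_of_le_right (by linarith)

lemma min_one_mul_le_mul_min_one {K u : ℝ} (hK : 1 ≤ K) : min 1 (K * u) ≤ K * min 1 u := by
  rw [mul_min_of_nonneg _ _ (zero_le_one.trans hK), mul_one]
  exact min_le_min_right _ hK

lemma min_one_mul_rpow_le {K x r : ℝ} (hK : 1 ≤ K) (hx : 0 ≤ x) (hr : 0 ≤ r) :
    min 1 ((K * x) ^ r) ≤ K ^ r * min 1 (x ^ r) := by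
  rw [Real.mul_rpow (zero_le_one.trans hK) hx]
  exact min_one_mul_le_mul_min_one (Real.one_le_rpow hK hr)

lemma min_one_add_rpow_le {x y r ε : ℝ} (hx : 0 ≤ x) (hy : 0 ≤ y) (hr : 0 ≤ r) (hε : 0 < ε) :
    min 1 ((x + y) ^ r) ≤ (1 + ε) ^ r * min 1 (x ^ r) + (1 + ε⁻¹) ^ r * min 1 (y ^ r) := by
  have hx' := min_one_mul_rpow_le (by linarith : 1 ≤ 1 + ε) hx hr
  have hy' := min_one_mul_rpow_le (by linarith [inv_pos.2 hε] : 1 ≤ 1 + ε⁻¹) hy hr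
  have hx0 : 0 ≤ min 1 (((1 + ε) * x) ^ r) := le_min zero_le_one (by positivity)
  have hy0 : 0 ≤ min 1 (((1 + ε⁻¹) * y) ^ r) := le_min zero_le_one (by positivity)
  calc min 1 ((x + y) ^ r) ≤ min 1 (max ((1 + ε) * x) ((1 + ε⁻¹) * y) ^ r) := by
        gcongr
        exact add_le_max_one_add_mul hε
    _ ≤ min 1 (((1 + ε) * x) ^ r) + min 1 (((1 + ε⁻¹) * y) ^ r) := by
        rcases max_choice ((1 + ε) * x) ((1 + ε⁻¹) * y) with h | h <;> rw [h] <;> linarith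
    _ ≤ _ := add_le_add hx' hy'

lemma tendsto_of_forall_le_mul_add_mul {α : Type*} {l : Filter α} {f g e : α → ℝ} {L : ℝ}
    (hg : Tendsto g l (𝓝 L)) (he : Tendsto e l (𝓝 0))
    (hfg : ∀ K > 1, ∃ C, ∀ᶠ t in l, f t ≤ K * g t + C * e t ∧ g t ≤ K * f t + C * e t) :
    Tendsto f l (𝓝 L) := by
  have hmulK : Tendsto (fun K : ℝ => K * L) (𝓝[>] 1) (𝓝 L) := by
    simpa using ((continuous_mul_const L).tendsto 1).mono_left (nhdsWithin_le_nhds (s := Ioi 1))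
  have hdivK : Tendsto (fun K : ℝ => L / K) (𝓝[>] 1) (𝓝 L) := by
    have : ContinuousAt (fun K : ℝ => L / K) 1 := continuousAt_const.div continuousAt_id one_ne_zero
    simpa using this.tendsto.mono_left nhdsWithin_le_nhds
  refine tendsto_order.2 ⟨fun a ha => ?_, fun b hb => ?_⟩
  · obtain ⟨K, hKa, hK⟩ := ((hdivK.eventually (lt_mem_nhds ha)).and self_mem_nhdsWithin).exists
    obtain ⟨C, hC⟩ := hfg K hK
    have hlow : Tendsto (fun t => (g t - C * e t) / K) l (𝓝 (L / K)) := by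
      simpa using (hg.sub (he.const_mul C)).div_const K
    filter_upwards [hlow.eventually (lt_mem_nhds hKa), hC] with t ht hCt
    rw [lt_div_iff₀ (zero_lt_one.trans hK)] at ht
    nlinarith [hCt.2]
  · obtain ⟨K, hKb, hK⟩ := ((hmulK.eventually (gt_mem_nhds hb)).and self_mem_nhdsWithin).exists
    obtain ⟨C, hC⟩ := hfg K hK
    have hup : Tendsto (fun t => K * g t + C * e t) l (𝓝 (K * L)) := by
      simpa using (hg.const_mul K).add (he.const_mul C)
    filter_upwards [hup.eventually (gt_mem_nhds hKb), hC] with t ht hCt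
    linarith [hCt.1]

section TruncatedMoment

variable {Ω : Type*} [MeasurableSpace Ω] {P : Measure Ω} {r : ℝ} {Y Z : Ω → ℝ}

noncomputable def truncatedMoment (P : Measure Ω) (r : ℝ) (Y : Ω → ℝ) : ℝ :=
  ∫ ω, min 1 (|Y ω| ^ r) ∂P

lemma truncatedMoment_neg : truncatedMoment P r (-Y) = truncatedMoment P r Y := by
  simp [truncatedMoment]

lemma integrable_min_one_abs_rpow [IsFiniteMeasure P] (hY : AEMeasurable Y P) :
    Integrable (fun ω => min 1 (|Y ω| ^ r)) P := by
  have hmeas : AEMeasurable (fun ω => min 1 (|Y ω| ^ r)) P :=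
    aemeasurable_const.min ((measurable_abs.comp_aemeasurable hY).pow_const r)
  refine Integrable.of_bound hmeas.aestronglyMeasurable 1 (ae_of_all _ fun ω => ?_)
  rw [Real.norm_of_nonneg (le_min zero_le_one (by positivity))]
  exact min_le_left _ _

lemma truncatedMoment_add_le [IsFiniteMeasure P] (hY : AEMeasurable Y P) (hZ : AEMeasurable Z P)
    (hr : 0 ≤ r) {ε : ℝ} (hε : 0 < ε) :
    truncatedMoment P r (Y + Z) ≤
      (1 + ε) ^ r * truncatedMoment P r Y + (1 + ε⁻¹) ^ r * truncatedMoment P r Z := by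
  rw [truncatedMoment, truncatedMoment, truncatedMoment, ← integral_const_mul,
    ← integral_const_mul, ← integral_add ((integrable_min_one_abs_rpow hY).const_mul _)
      ((integrable_min_one_abs_rpow hZ).const_mul _)]
  refine integral_mono (integrable_min_one_abs_rpow (hY.add hZ))
    (((integrable_min_one_abs_rpow hY).const_mul _).add
      ((integrable_min_one_abs_rpow hZ).const_mul _)) fun ω => ?_
  calc min 1 (|Y ω + Z ω| ^ r) ≤ min 1 ((|Y ω| + |Z ω|) ^ r) := by
        gcongr
        exact abs_add_le _ _
    _ ≤ _ := min_one_add_rpow_le (abs_nonneg _) (abs_nonneg _) hr hε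

lemma exists_truncatedMoment_add_le [IsFiniteMeasure P] (hr : 0 < r) {K : ℝ} (hK : 1 < K) :
    ∃ C, ∀ Y Z : Ω → ℝ, AEMeasurable Y P → AEMeasurable Z P →
      truncatedMoment P r (Y + Z) ≤ K * truncatedMoment P r Y + C * truncatedMoment P r Z := by
  set ε := K ^ r⁻¹ - 1
  have hε : 0 < ε := sub_pos.2 (Real.one_lt_rpow hK (inv_pos.2 hr))
  have hεK : (1 + ε) ^ r = K := by
    rw [add_sub_cancel, Real.rpow_inv_rpow (by linarith) hr.ne']
  exact ⟨(1 + ε⁻¹) ^ r, fun Y Z hY hZ => hεK ▸ truncatedMoment_add_le hY hZ hr.le hε⟩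

lemma rpow_neg_mul_min_one_abs_mul_rpow {c y : ℝ} (hc : 0 < c) :
    c ^ (-r) * min 1 (|c * y| ^ r) = min (c ^ (-r)) (|y| ^ r) := by
  rw [mul_min_of_nonneg _ _ (Real.rpow_nonneg hc.le _), mul_one, abs_mul, abs_of_pos hc,
    Real.mul_rpow hc.le (abs_nonneg y), ← mul_assoc, ← Real.rpow_add hc, neg_add_cancel,
    Real.rpow_zero, one_mul]

lemma tendsto_rpow_neg_mul_truncatedMoment_const_mul (hY : AEMeasurable Y P)
    (hYr : Integrable (fun ω => |Y ω| ^ r) P) (hr : 0 < r) :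
    Tendsto (fun c => c ^ (-r) * truncatedMoment P r (fun ω => c * Y ω)) (𝓝[>] 0)
      (𝓝 (∫ ω, |Y ω| ^ r ∂P)) := by
  have heq : ∀ᶠ c in 𝓝[>] 0, c ^ (-r) * truncatedMoment P r (fun ω => c * Y ω) =
      ∫ ω, min (c ^ (-r)) (|Y ω| ^ r) ∂P := by
    filter_upwards [self_mem_nhdsWithin] with c (hc : 0 < c)
    rw [truncatedMoment, ← integral_const_mul]
    simp_rw [rpow_neg_mul_min_one_abs_mul_rpow hc]
  refine (tendsto_congr' heq).2 (tendsto_integral_filter_of_dominated_convergence _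
    (Eventually.of_forall fun c => (aemeasurable_const.min
      ((measurable_abs.comp_aemeasurable hY).pow_const r)).aestronglyMeasurable) ?_ hYr ?_)
  · filter_upwards [self_mem_nhdsWithin] with c (hc : 0 < c)
    refine ae_of_all _ fun ω => ?_
    rw [Real.norm_of_nonneg (le_min (by positivity) (by positivity))]
    exact min_le_right _ _
  · refine ae_of_all _ fun ω => tendsto_const_nhds.congr' ?_
    filter_upwards [(tendsto_rpow_neg_nhdsGT_zero (neg_neg_of_pos hr)).eventually_ge_atTop
      (|Y ω| ^ r)] with c hc
    exact (min_eq_right hc).symm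

lemma tendsto_rpow_neg_half_mul_truncatedMoment_gaussian {U : Ω → ℝ} {σ : ℝ} (hU : Measurable U)
    (hUlaw : P.map U = gaussianReal 0 1) (hσ : 0 ≤ σ) (hr : 0 < r) :
    Tendsto (fun t => t ^ (-(r / 2)) * truncatedMoment P r (fun ω => σ * √t * U ω)) (𝓝[>] 0)
      (𝓝 (σ ^ r * ∫ x, |x| ^ r ∂gaussianReal 0 1)) := by
  have hmoment : Integrable (fun x : ℝ => |σ * x| ^ r) (gaussianReal 0 1) := by
    have := (memLp_id_gaussianReal (μ := 0) (v := 1) r.toNNReal).integrable_norm_rpow'.const_mul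
      (σ ^ r)
    rw [ENNReal.coe_toReal, Real.coe_toNNReal _ hr.le] at this
    simpa [abs_mul, abs_of_nonneg hσ, Real.mul_rpow hσ (abs_nonneg _)] using this
  have hsqrt : Tendsto Real.sqrt (𝓝[>] 0) (𝓝[>] 0) :=
    tendsto_nhdsWithin_iff.2
      ⟨(Real.continuous_sqrt.tendsto' 0 0 Real.sqrt_zero).mono_left nhdsWithin_le_nhds,
        eventually_mem_nhdsWithin.mono fun t ht => Real.sqrt_pos.2 ht⟩
  have hlim := (tendsto_rpow_neg_mul_truncatedMoment_const_mul (hU.const_mul σ).aemeasurable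
    ((hUlaw ▸ hmoment).comp_measurable hU) hr).comp hsqrt
  have hlimit : ∫ ω, |σ * U ω| ^ r ∂P = σ ^ r * ∫ x, |x| ^ r ∂gaussianReal 0 1 := by
    rw [← hUlaw, integral_map hU.aemeasurable
      (measurable_abs.pow_const r).aestronglyMeasurable, ← integral_const_mul]
    simp_rw [abs_mul, abs_of_nonneg hσ, Real.mul_rpow hσ (abs_nonneg _)]
  rw [← hlimit]
  refine hlim.congr' ?_
  filter_upwards [self_mem_nhdsWithin] with t (ht : 0 < t)
  have hexp : √t ^ (-r) = t ^ (-(r / 2)) := by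
    rw [Real.sqrt_eq_rpow, ← Real.rpow_mul ht.le]
    ring_nf
  simp only [Function.comp_apply, hexp, ← mul_assoc, mul_comm √t σ]

end TruncatedMoment

theorem small_time_power_moment_gaussian_limit_general {Ω : Type*} [MeasurableSpace Ω]
    (P : Measure Ω) [IsProbabilityMeasure P]
    (U : Ω → ℝ) (X'' : ℝ → Ω → ℝ) (X : ℝ → Ω → ℝ) (σ r : ℝ)
    (hσ : 0 < σ) (hr0 : 0 < r)
    (hU : Measurable U) (hUlaw : Measure.map U P = gaussianReal 0 1)
    (hX'' : ∀ t, Measurable (X'' t))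
    (h2 : Tendsto (fun t : ℝ => t ^ (-(r / 2)) * ∫ ω, min 1 (|X'' t ω| ^ r) ∂P)
      (𝓝[>] 0) (𝓝 0))
    (hX : ∀ t ω, X t ω = σ * Real.sqrt t * U ω + X'' t ω) :
    Tendsto (fun t : ℝ => t ^ (-(r / 2)) * ∫ ω, min 1 (|X t ω| ^ r) ∂P) (𝓝[>] 0)
      (𝓝 (σ ^ r * ∫ x, |x| ^ r ∂gaussianReal 0 1)) := by
  refine tendsto_of_forall_le_mul_add_mul
    (tendsto_rpow_neg_half_mul_truncatedMoment_gaussian hU hUlaw hσ.le hr0) h2 fun K hK => ?_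
  obtain ⟨C, hC⟩ := exists_truncatedMoment_add_le (P := P) hr0 hK
  refine ⟨C, eventually_mem_nhdsWithin.mono fun t (ht : 0 < t) => ?_⟩
  have hY : AEMeasurable (fun ω => σ * √t * U ω) P := (hU.const_mul _).aemeasurable
  have hZ : AEMeasurable (X'' t) P := (hX'' t).aemeasurable
  have hXt : X t = (fun ω => σ * √t * U ω) + X'' t := funext (hX t)
  have hup := hC _ _ hY hZ
  have hdown := hC _ _ (hY.add hZ) hZ.neg
  rw [add_neg_cancel_right, truncatedMoment_neg, ← hXt] at hdown
  rw [← hXt] at hup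
  have htr : 0 ≤ t ^ (-(r / 2)) := Real.rpow_nonneg ht.le _
  simp only [truncatedMoment] at hup hdown ⊢
  constructor
  · linarith [mul_le_mul_of_nonneg_left hup htr]
  · linarith [mul_le_mul_of_nonneg_left hdown htr]

theorem small_time_power_moment_gaussian_limit {Ω : Type*} [MeasurableSpace Ω]
    (P : Measure Ω) [IsProbabilityMeasure P]
    (U : Ω → ℝ) (X'' : ℝ → Ω → ℝ) (X : ℝ → Ω → ℝ) (σ r : ℝ)
    (hσ : 0 < σ) (hr0 : 0 < r) (hr2 : r < 2)
    (hU : Measurable U) (hUlaw : Measure.map U P = gaussianReal 0 1)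
    (hX'' : ∀ t, Measurable (X'' t))
    (hindep : ∀ t, 0 < t → IndepFun U (X'' t) P)
    (h1 : Tendsto (fun t : ℝ => ∫ ω, min 1 ((X'' t ω) ^ 2 / t) ∂P) (𝓝[>] 0) (𝓝 0))
    (h2 : Tendsto (fun t : ℝ => t ^ (-(r / 2)) * ∫ ω, min 1 (|X'' t ω| ^ r) ∂P)
      (𝓝[>] 0) (𝓝 0))
    (hX : ∀ t ω, X t ω = σ * Real.sqrt t * U ω + X'' t ω) :
    Tendsto (fun t : ℝ => t ^ (-(r / 2)) * ∫ ω, min 1 (|X t ω| ^ r) ∂P) (𝓝[>] 0)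
      (𝓝 (σ ^ r * ∫ x, |x| ^ r ∂gaussianReal 0 1)) :=
  small_time_power_moment_gaussian_limit_general P U X'' X σ r hσ hr0 hU hUlaw hX'' h2 hX
end

section
/- Let X be a Lévy process with c = 0, ∫ min(1,|x|) F(dx) < ∞, drift b̄ ≠ 0, and let 0 < r < 1. Write X_t = b̄t + X'_t where X'_t is the pure-jump part, and assume t^{−r} E[min(1,|X'_t|^r)] → 0 as t → 0. Then t^{−r} E[min(1,|X_t|^r)] → |b̄|^r as t → 0. -/
open MeasureTheory ProbabilityTheory Filter Set
open scoped Topology ENNReal NNReal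

noncomputable section

/-- `X` is a Lévy process with characteristics `(b, c, F)` under `P`:
càdlàg paths starting at `0`, stationary independent increments, and the
Lévy–Khintchine formula for its characteristic function. -/
structure IsLevy {Ω : Type*} [MeasurableSpace Ω] (P : Measure Ω)
    (X : ℝ → Ω → ℝ) (b c : ℝ) (F : Measure ℝ) : Prop where
  meas : ∀ t, Measurable (X t)
  start : ∀ ω, X 0 ω = 0
  cadlag : ∀ ω, ∀ t : ℝ, ContinuousWithinAt (fun s => X s ω) (Set.Ici t) t ∧
    ∃ l : ℝ, Filter.Tendsto (fun s => X s ω) (𝓝[<] t) (𝓝 l)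
  indep_incr : ∀ (n : ℕ) (t : ℕ → ℝ), Monotone t →
    iIndepFun
      (fun i : Fin n => fun ω => X (t (i.1 + 1)) ω - X (t i.1) ω) P
  stat_incr : ∀ s t : ℝ, 0 ≤ s → 0 ≤ t →
    Measure.map (fun ω => X (s + t) ω - X s ω) P = Measure.map (X t) P
  c_nonneg : 0 ≤ c
  F_zero : F {0} = 0
  F_int : ∫⁻ x, ENNReal.ofReal (min (x ^ 2) 1) ∂F ≠ ∞
  levy_khintchine : ∀ (u t : ℝ), 0 ≤ t →
    ∫ ω, Complex.exp (Complex.I * u * X t ω) ∂P =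
      Complex.exp (t * (Complex.I * u * b - c * u ^ 2 / 2 +
        ∫ x : ℝ, (Complex.exp (Complex.I * u * x) - 1 -
          (if |x| ≤ 1 then Complex.I * u * x else 0)) ∂F))

/-!
Write `φ_r(x) = min 1 |x|^r`. For `0 ≤ r ≤ 1` the function `φ_r` is subadditive, hence
`|φ_r(x) - φ_r(y)| ≤ φ_r(x - y)`. Applied with `x = X_t`, `y = b̄t` and integrated, this gives
`|E φ_r(X_t) - φ_r(b̄t)| ≤ E φ_r(X_t - b̄t) = o(t^r)`, while `φ_r(b̄t) = |b̄|^r t^r` for small `t`.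
-/

lemma min_one_add_le {a b : ℝ} (ha : 0 ≤ a) (hb : 0 ≤ b) :
    min 1 (a + b) ≤ min 1 a + min 1 b := by
  simp only [min_def]
  split_ifs <;> linarith

section FractionalTruncation

variable {r : ℝ}

lemma min_one_rpow_abs_add_le (hr0 : 0 ≤ r) (hr1 : r ≤ 1) (x y : ℝ) :
    min 1 (|x + y| ^ r) ≤ min 1 (|x| ^ r) + min 1 (|y| ^ r) :=
  calc min 1 (|x + y| ^ r)
      ≤ min 1 (|x| ^ r + |y| ^ r) := by
        gcongr
        exact (Real.rpow_le_rpow (abs_nonneg _) (abs_add_le x y) hr0).trans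
          (Real.rpow_add_le_add_rpow (abs_nonneg x) (abs_nonneg y) hr0 hr1)
    _ ≤ min 1 (|x| ^ r) + min 1 (|y| ^ r) := min_one_add_le (by positivity) (by positivity)

lemma abs_min_one_rpow_abs_sub_le (hr0 : 0 ≤ r) (hr1 : r ≤ 1) (x y : ℝ) :
    |min 1 (|x| ^ r) - min 1 (|y| ^ r)| ≤ min 1 (|x - y| ^ r) := by
  have hx := min_one_rpow_abs_add_le hr0 hr1 y (x - y)
  have hy := min_one_rpow_abs_add_le hr0 hr1 x (y - x)
  rw [add_sub_cancel] at hx hy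
  rw [abs_sub_comm y x] at hy
  exact abs_sub_le_iff.2 ⟨by linarith, by linarith⟩

lemma min_one_rpow_abs_mul_of_le_one (hr0 : 0 ≤ r) {a t : ℝ} (ht : 0 < t) (hat : |a * t| ≤ 1) :
    t ^ (-r) * min 1 (|a * t| ^ r) = |a| ^ r := by
  rw [min_eq_right (Real.rpow_le_one (abs_nonneg _) hat hr0), abs_mul, abs_of_pos ht,
    Real.mul_rpow (abs_nonneg a) ht.le, mul_left_comm, ← Real.rpow_add ht, neg_add_cancel,
    Real.rpow_zero, mul_one]

variable {Ω : Type*} [MeasurableSpace Ω] {P : Measure Ω} {Y : Ω → ℝ}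

lemma integrable_min_one_rpow_abs [IsFiniteMeasure P] (hr0 : 0 ≤ r) (hY : AEMeasurable Y P) :
    Integrable (fun ω => min 1 (|Y ω| ^ r)) P := by
  refine .of_bound (by fun_prop) 1 (ae_of_all _ fun ω => ?_)
  rw [Real.norm_of_nonneg (by positivity)]
  exact min_le_left _ _

lemma abs_integral_min_one_rpow_abs_sub_le [IsProbabilityMeasure P] (hr0 : 0 ≤ r) (hr1 : r ≤ 1)
    (hY : AEMeasurable Y P) (c : ℝ) :
    |∫ ω, min 1 (|Y ω| ^ r) ∂P - min 1 (|c| ^ r)| ≤ ∫ ω, min 1 (|Y ω - c| ^ r) ∂P :=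
  calc |∫ ω, min 1 (|Y ω| ^ r) ∂P - min 1 (|c| ^ r)|
      = |∫ ω, (min 1 (|Y ω| ^ r) - min 1 (|c| ^ r)) ∂P| := by
        rw [integral_sub (integrable_min_one_rpow_abs hr0 hY) (integrable_const _),
          integral_const, probReal_univ, one_smul]
    _ ≤ ∫ ω, |min 1 (|Y ω| ^ r) - min 1 (|c| ^ r)| ∂P := abs_integral_le_integral_abs
    _ ≤ ∫ ω, min 1 (|Y ω - c| ^ r) ∂P :=
        integral_mono_of_nonneg (ae_of_all _ fun _ => abs_nonneg _)
          (integrable_min_one_rpow_abs hr0 (hY.sub_const c))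
          (ae_of_all _ fun ω => abs_min_one_rpow_abs_sub_le hr0 hr1 (Y ω) c)

end FractionalTruncation

theorem drift_dominates_fractional_moment_general {Ω : Type*} [MeasurableSpace Ω]
    (P : Measure Ω) [IsProbabilityMeasure P] (X : ℝ → Ω → ℝ) (b : ℝ) (F : Measure ℝ)
    (hX : IsLevy P X b 0 F)
    (bbar : ℝ)
    (r : ℝ) (hr0 : 0 < r) (hr1 : r < 1)
    (hX' : Tendsto (fun t : ℝ => t ^ (-r) * ∫ ω, min 1 (|X t ω - bbar * t| ^ r) ∂P)
      (𝓝[>] 0) (𝓝 0)) :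
    Tendsto (fun t : ℝ => t ^ (-r) * ∫ ω, min 1 (|X t ω| ^ r) ∂P) (𝓝[>] 0)
      (𝓝 (|bbar| ^ r)) := by
  have hdrift_small : ∀ᶠ t in 𝓝[>] (0 : ℝ), |bbar * t| ≤ 1 := by
    have : Tendsto (fun t : ℝ => |bbar * t|) (𝓝 0) (𝓝 0) := by
      simpa using ((continuous_const.mul continuous_id).abs.tendsto (0 : ℝ))
    exact nhdsWithin_le_nhds ((this.eventually_lt_const one_pos).mono fun _ => le_of_lt)
  rw [tendsto_iff_dist_tendsto_zero]
  refine squeeze_zero' (.of_forall fun _ => dist_nonneg) ?_ hX'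
  filter_upwards [self_mem_nhdsWithin, hdrift_small] with t (ht : 0 < t) hbt
  calc dist (t ^ (-r) * ∫ ω, min 1 (|X t ω| ^ r) ∂P) (|bbar| ^ r)
      = t ^ (-r) * |∫ ω, min 1 (|X t ω| ^ r) ∂P - min 1 (|bbar * t| ^ r)| := by
        rw [Real.dist_eq, ← min_one_rpow_abs_mul_of_le_one hr0.le ht hbt, ← mul_sub, abs_mul,
          abs_of_pos (Real.rpow_pos_of_pos ht _)]
    _ ≤ t ^ (-r) * ∫ ω, min 1 (|X t ω - bbar * t| ^ r) ∂P := by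
        gcongr
        exact abs_integral_min_one_rpow_abs_sub_le hr0.le hr1.le (hX.meas t).aemeasurable _

theorem drift_dominates_fractional_moment {Ω : Type*} [MeasurableSpace Ω]
    (P : Measure Ω) [IsProbabilityMeasure P] (X : ℝ → Ω → ℝ) (b : ℝ) (F : Measure ℝ)
    (hX : IsLevy P X b 0 F)
    (hFV : ∫⁻ x, ENNReal.ofReal (min 1 |x|) ∂F ≠ ∞)
    (bbar : ℝ) (hbbar : bbar = b - ∫ x in Set.Icc (-1:ℝ) 1, x ∂F) (hb : bbar ≠ 0)
    (r : ℝ) (hr0 : 0 < r) (hr1 : r < 1)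
    (hX' : Tendsto (fun t : ℝ => t ^ (-r) * ∫ ω, min 1 (|X t ω - bbar * t| ^ r) ∂P)
      (𝓝[>] 0) (𝓝 0)) :
    Tendsto (fun t : ℝ => t ^ (-r) * ∫ ω, min 1 (|X t ω| ^ r) ∂P) (𝓝[>] 0)
      (𝓝 (|bbar| ^ r)) :=
  drift_dominates_fractional_moment_general P X b F hX bbar r hr0 hr1 hX'
end
end
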